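/- Let Q ∈ ℝ^{n×k} have orthonormal columns, P ∈ ℝ^{n×k} a selection matrix with QᵀP invertible, and ℙ = P(QᵀP)⁻¹Qᵀ with ℙ ≠ 0 and ℙ ≠ I. Then ‖ℙ‖₂ = ‖(QᵀP)⁻¹‖₂. -/
import Mathlib

open Matrix

/-- Spectral norm (operator 2-norm) of a real matrix. -/
noncomputable def spec {m n : ℕ} (A : Matrix (Fin m) (Fin n) ℝ) : ℝ :=
  ‖LinearMap.toContinuousLinearMap (Matrix.toEuclideanLin A)‖

/-- A selection matrix: columns of the identity matrix indexed by distinct indices. -/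
def IsSelection {m k : ℕ} (P : Matrix (Fin m) (Fin k) ℝ) : Prop :=
  ∃ p : Fin k → Fin m, Function.Injective p ∧
    P = Matrix.of fun i j => if i = p j then (1 : ℝ) else 0

lemma specAux_mul {m n p : ℕ} (A : Matrix (Fin m) (Fin n) ℝ) (B : Matrix (Fin n) (Fin p) ℝ) :
    LinearMap.toContinuousLinearMap (Matrix.toEuclideanLin (A * B)) =
      (LinearMap.toContinuousLinearMap (Matrix.toEuclideanLin A)).comp
        (LinearMap.toContinuousLinearMap (Matrix.toEuclideanLin B)) := by
  ext x
  simp [Matrix.toEuclideanLin_apply, Matrix.mulVec_mulVec]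

lemma spec_mul_le {m n p : ℕ} (A : Matrix (Fin m) (Fin n) ℝ) (B : Matrix (Fin n) (Fin p) ℝ) :
    spec (A * B) ≤ spec A * spec B := by
  rw [spec, specAux_mul]
  exact ContinuousLinearMap.opNorm_comp_le _ _

lemma spec_nonneg {m n : ℕ} (A : Matrix (Fin m) (Fin n) ℝ) : 0 ≤ spec A := norm_nonneg _

lemma spec_transpose {m n : ℕ} (A : Matrix (Fin m) (Fin n) ℝ) : spec Aᵀ = spec A := by
  have h : Aᵀ = Aᴴ := by
    ext i j; simp [Matrix.conjTranspose_apply]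
  rw [spec, h, Matrix.toEuclideanLin_conjTranspose_eq_adjoint,
    LinearMap.adjoint_toContinuousLinearMap]
  exact ContinuousLinearMap.adjoint.norm_map _

lemma spec_le_one {m n : ℕ} (B : Matrix (Fin m) (Fin n) ℝ) (hB : Bᵀ * B = 1) :
    spec B ≤ 1 := by
  apply ContinuousLinearMap.opNorm_le_bound _ zero_le_one
  intro x
  rw [one_mul]
  have key : (Matrix.toEuclideanLin Bᴴ) ((Matrix.toEuclideanLin B) x) = x := by
    have hc : Bᴴ = Bᵀ := by ext i j; simp [Matrix.conjTranspose_apply]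
    rw [hc]
    simp [Matrix.toEuclideanLin_apply, Matrix.mulVec_mulVec, hB, Matrix.one_mulVec]
  have hsq : ‖(LinearMap.toContinuousLinearMap (Matrix.toEuclideanLin B)) x‖ ^ 2
      = ‖x‖ ^ 2 := by
    rw [← real_inner_self_eq_norm_sq, ← real_inner_self_eq_norm_sq]
    simp only [LinearMap.coe_toContinuousLinearMap']
    calc @inner ℝ _ _ ((Matrix.toEuclideanLin B) x) ((Matrix.toEuclideanLin B) x)
        = @inner ℝ _ _ ((LinearMap.adjoint (Matrix.toEuclideanLin B))
            ((Matrix.toEuclideanLin B) x)) x := by rw [LinearMap.adjoint_inner_left]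
      _ = @inner ℝ _ _ x x := by
            rw [← Matrix.toEuclideanLin_conjTranspose_eq_adjoint, key]
  have := congrArg Real.sqrt hsq
  rw [Real.sqrt_sq (norm_nonneg _), Real.sqrt_sq (norm_nonneg _)] at this
  exact this.le

lemma selection_tmul {m k : ℕ} {P : Matrix (Fin m) (Fin k) ℝ} (hP : IsSelection P) :
    Pᵀ * P = 1 := by
  obtain ⟨p, hpinj, rfl⟩ := hP
  ext i j
  simp only [Matrix.mul_apply, Matrix.transpose_apply, Matrix.of_apply, Matrix.one_apply]
  rw [Finset.sum_eq_single (p i)]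
  · by_cases h : i = j
    · simp [h]
    · have : p i ≠ p j := fun hc => h (hpinj hc)
      simp [h, this]
  · intro b _ hb
    simp [hb]
  · simp

/-- for the oblique projector ℙ = P (QᵀP)⁻¹ Qᵀ with ℙ ≠ 0 and ℙ ≠ I,
‖ℙ‖₂ = ‖(QᵀP)⁻¹‖₂. -/
theorem oblique_projector_norm {n k : ℕ}
    (Q : Matrix (Fin n) (Fin k) ℝ) (hQ : Qᵀ * Q = 1)
    (P : Matrix (Fin n) (Fin k) ℝ) (hP : IsSelection P)
    (hinv : IsUnit (Qᵀ * P))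
    (Pb : Matrix (Fin n) (Fin n) ℝ) (hPb : Pb = P * (Qᵀ * P)⁻¹ * Qᵀ)
    (h0 : Pb ≠ 0) (h1 : Pb ≠ 1) :
    spec Pb = spec ((Qᵀ * P)⁻¹) := by
  set M := (Qᵀ * P)⁻¹ with hM
  have hPtP : Pᵀ * P = 1 := selection_tmul hP
  have hQle : spec Q ≤ 1 := spec_le_one Q hQ
  have hQtle : spec Qᵀ ≤ 1 := by rw [spec_transpose]; exact hQle
  have hPle : spec P ≤ 1 := spec_le_one P hPtP
  have hPtle : spec Pᵀ ≤ 1 := by rw [spec_transpose]; exact hPle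
  have le1 : spec Pb ≤ spec M := by
    calc spec Pb = spec (P * M * Qᵀ) := by rw [hPb]
      _ ≤ spec (P * M) * spec Qᵀ := spec_mul_le _ _
      _ ≤ spec (P * M) * 1 := by
            exact mul_le_mul_of_nonneg_left hQtle (spec_nonneg _)
      _ = spec (P * M) := mul_one _
      _ ≤ spec P * spec M := spec_mul_le _ _
      _ ≤ 1 * spec M := mul_le_mul_of_nonneg_right hPle (spec_nonneg _)
      _ = spec M := one_mul _
  have hMeq : M = Pᵀ * Pb * Q := by
    rw [hPb]
    calc M = 1 * M * 1 := by rw [one_mul, mul_one]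
      _ = (Pᵀ * P) * M * (Qᵀ * Q) := by rw [hPtP, hQ]
      _ = Pᵀ * (P * M * Qᵀ) * Q := by
            simp only [Matrix.mul_assoc]
  have le2 : spec M ≤ spec Pb := by
    calc spec M = spec (Pᵀ * Pb * Q) := by rw [hMeq]
      _ ≤ spec (Pᵀ * Pb) * spec Q := spec_mul_le _ _
      _ ≤ spec (Pᵀ * Pb) * 1 := mul_le_mul_of_nonneg_left hQle (spec_nonneg _)
      _ = spec (Pᵀ * Pb) := mul_one _
      _ ≤ spec Pᵀ * spec Pb := spec_mul_le _ _
      _ ≤ 1 * spec Pb := mul_le_mul_of_nonneg_right hPtle (spec_nonneg _)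
      _ = spec Pb := one_mul _
  exact le_antisymm le1 le2
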